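/- arXiv:2106.06861 — 4 statements merged into one kernel-verified Lean document; each statement's English description precedes it below -/
import Mathlib

section
/- Let a, b ∈ ℚ be such that the Weierstrass curve Γ_{a,b} : y² = x³ + a·x² + b·x is nonsingular and the torsion subgroup of its group of ℚ-rational points is isomorphic to ℤ/12ℤ. Then there exists t ∈ ℚ with t > 0 such that Γ_{a,b} is isomorphic over ℚ (i.e. related by an admissible Weierstrass change of variables) to the curve Γ_{a₁,b₁} : y² = x³ + a₁·x² + b₁·x, where a₁ = 2·(3t⁸ + 24t⁶ + 6t⁴ − 1) and b₁ = (t² − 1)⁶·(1 + 3t²)². -/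
/-!
The point `(0, 0)` has order 2, so it is `6P` for a generator `P` of the torsion group. Since
`3P` halves `(0, 0)`, the duplication formula forces `b = d²` and `a = e² - 2d`. The point `4P`
has order 3, so its abscissa `x` is a root of the 3-division polynomial, which now reads
`4e²x³ = (d - x)³(d + 3x)`; with the curve equation this makes `(d - x)/(d + 3x)` a square `T²`.
Solving for `x` and `d` in terms of `T` and `d + 3x` gives `e = 8T³u` and
`d = u²(1 - T²)³(1 + 3T²)`, and scaling by `u` is the required change of variables,
with `t = |T|`.
-/

/-- The Weierstrass curve `y² = x³ + a·x² + b·x` over a field `F`. -/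
def Gamma {F : Type} [Field F] (a b : F) : WeierstrassCurve.Affine F :=
  { a₁ := 0, a₂ := a, a₃ := 0, a₄ := b, a₆ := 0 }

open WeierstrassCurve WeierstrassCurve.Affine

section Curve

variable {F : Type} [Field F] {a b x y : F}

lemma Gamma_Δ (a b : F) : (Gamma a b).Δ = 16 * b ^ 2 * (a ^ 2 - 4 * b) := by
  simp only [Gamma, Δ, b₂, b₄, b₆, b₈]
  ring

lemma Gamma_equation_iff : (Gamma a b).Equation x y ↔ y ^ 2 = x ^ 3 + a * x ^ 2 + b * x := by
  simp only [equation_iff, Gamma]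
  constructor <;> intro h <;> linear_combination h

lemma Gamma_negY : (Gamma a b).negY x y = -y := by
  simp [Gamma]

lemma Gamma_addX_self_eq_iff [DecidableEq F] (hy : y ≠ -y) (x' : F) :
    (Gamma a b).addX x x ((Gamma a b).slope x x y y) = x' ↔
      (3 * x ^ 2 + 2 * a * x + b) ^ 2 = (a + 2 * x + x') * (2 * y) ^ 2 := by
  have h2y : 2 * y ≠ 0 := fun h => hy (by linear_combination h)
  have h2 : (2 : F) ≠ 0 := left_ne_zero_of_mul h2y
  have hy0 : y ≠ 0 := right_ne_zero_of_mul h2y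
  rw [slope_of_Y_ne rfl (by rwa [Gamma_negY]), Gamma_negY, show y - -y = 2 * y by ring]
  simp only [addX, Gamma]
  constructor <;> intro h
  · field_simp at h
    linear_combination h
  · field_simp
    linear_combination h

lemma Gamma_nonsingular_zero (hΔ : (Gamma a b).Δ ≠ 0) : (Gamma a b).Nonsingular 0 0 :=
  (equation_iff_nonsingular_of_Δ_ne_zero hΔ).mp (Gamma_equation_iff.mpr (by ring))

lemma Gamma_exists_sq_of_add_self_eq_origin [DecidableEq F] {Q : (Gamma a b).Point}
    {h₀ : (Gamma a b).Nonsingular 0 0} (hQ : Q + Q = Point.some 0 0 h₀) :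
    ∃ d e : F, b = d ^ 2 ∧ a = e ^ 2 - 2 * d := by
  rcases Q with _ | @⟨x, y, hQ'⟩
  · exact (Point.some_ne_zero h₀ (hQ.symm.trans (add_zero 0))).elim
  have hy : y ≠ -y := by
    intro h
    rw [Point.add_self_of_Y_eq (by rwa [Gamma_negY])] at hQ
    exact Point.some_ne_zero h₀ hQ.symm
  rw [Point.add_self_of_Y_ne (by rwa [Gamma_negY]), Point.some.injEq] at hQ
  have hdbl := (Gamma_addX_self_eq_iff hy 0).mp hQ.1
  have hcurve := Gamma_equation_iff.mp hQ'.1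
  have hx : x ≠ 0 := by
    rintro rfl
    have hy0 : y = 0 := (pow_eq_zero_iff two_ne_zero).mp (by linear_combination hcurve)
    exact hy (by rw [hy0, neg_zero])
  have hb : b = x ^ 2 := by
    have : (x ^ 2 - b) ^ 2 = 0 := by linear_combination hdbl + 4 * (a + 2 * x) * hcurve
    linear_combination -(pow_eq_zero_iff two_ne_zero).mp this
  refine ⟨x, y / x, hb, ?_⟩
  field_simp
  linear_combination -hcurve - x * hb

lemma Gamma_exists_root_of_three_nsmul_eq_zero [DecidableEq F] {R : (Gamma a b).Point}
    (hR : R ≠ 0) (h3 : 3 • R = 0) :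
    ∃ x y : F, y ≠ 0 ∧ y ^ 2 = x ^ 3 + a * x ^ 2 + b * x ∧
      3 * x ^ 4 + 4 * a * x ^ 3 + 6 * b * x ^ 2 - b ^ 2 = 0 := by
  rcases R with _ | @⟨x, y, hR'⟩
  · exact absurd rfl hR
  have hy : y ≠ -y := by
    intro h
    rw [succ_nsmul, two_nsmul, Point.add_self_of_Y_eq (by rwa [Gamma_negY]), zero_add] at h3
    exact hR h3
  rw [succ_nsmul, two_nsmul, add_eq_zero_iff_eq_neg, Point.add_self_of_Y_ne (by rwa [Gamma_negY]),
    Point.neg_some, Point.some.injEq] at h3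
  have hdbl := (Gamma_addX_self_eq_iff hy x).mp h3.1
  have hcurve := Gamma_equation_iff.mp hR'.1
  exact ⟨x, y, fun h => hy (by rw [h, neg_zero]), hcurve,
    by linear_combination -hdbl - 4 * (a + 3 * x) * hcurve⟩

lemma Gamma_variableChange_scale (u : Fˣ) {a b a' b' : F} (ha : a = u ^ 2 * a')
    (hb : b = u ^ 4 * b') : (⟨u, 0, 0, 0⟩ : VariableChange F) • Gamma a b = Gamma a' b' := by
  subst ha hb
  ext <;> simp [variableChange_def, Gamma]

end Curve

lemma exists_addOrderOf_eq_twelve_and_six_nsmul_eq {G : Type*} [AddCommGroup G]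
    (φ : AddCommGroup.torsion G ≃+ ZMod 12) {T : G} (hT : T ≠ 0) (h2 : T + T = 0) :
    ∃ P : G, addOrderOf P = 12 ∧ 6 • P = T := by
  have hTtor : T ∈ AddCommGroup.torsion G :=
    (isOfFinAddOrder_iff_nsmul_eq_zero).mpr ⟨2, two_pos, by rw [two_nsmul, h2]⟩
  have hφT : φ ⟨T, hTtor⟩ = 6 := by
    have h6 : ∀ z : ZMod 12, z ≠ 0 → z + z = 0 → z = 6 := by decide
    refine h6 _ ?_ ?_
    · rw [ne_eq, map_eq_zero_iff φ φ.injective, Subtype.ext_iff]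
      exact hT
    · rw [← map_add, ← (map_zero φ)]
      exact congrArg φ (Subtype.ext h2)
  refine ⟨φ.symm 1, ?_, ?_⟩
  · rw [AddSubgroup.addOrderOf_coe, AddEquiv.addOrderOf_eq, ZMod.addOrderOf_one]
  · rw [← AddSubgroup.coe_nsmul, ← map_nsmul, show (6 • 1 : ZMod 12) = 6 by decide, ← hφT,
      AddEquiv.symm_apply_apply]

section Parametrization

variable {F : Type} [Field F] [NeZero (2 : F)] {d e x y : F}

lemma exists_sq_mul_eq_of_three_division (he : e ≠ 0) (hy : y ≠ 0)
    (hcurve : y ^ 2 = x ^ 3 + (e ^ 2 - 2 * d) * x ^ 2 + d ^ 2 * x)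
    (hψ : 4 * e ^ 2 * x ^ 3 = (d - x) ^ 3 * (d + 3 * x)) :
    ∃ T : F, T ^ 2 * (d + 3 * x) = d - x := by
  have h4 : (4 : F) ≠ 0 := by simpa [show (4 : F) = 2 ^ 2 by norm_num] using two_ne_zero
  have hx : x ≠ 0 := by
    rintro rfl
    exact hy (pow_eq_zero_iff two_ne_zero |>.mp (by linear_combination hcurve))
  -- `x = ((x² - d²) / 2y)²` is a square, hence so is `(d - x)(d + 3x) = 4e²x³ / (d - x)²`.
  have hsq : 4 * x * y ^ 2 = ((x - d) * (x + d)) ^ 2 := by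
    linear_combination 4 * x * hcurve + hψ
  have hW : d + 3 * x ≠ 0 := by
    refine right_ne_zero_of_mul (a := (d - x) ^ 3) ?_
    rw [← hψ]
    exact mul_ne_zero (mul_ne_zero h4 (pow_ne_zero 2 he)) (pow_ne_zero 3 hx)
  refine ⟨e * x * (x + d) / (y * (d + 3 * x)), ?_⟩
  rw [div_pow, div_mul_eq_mul_div, div_eq_iff (pow_ne_zero 2 (mul_ne_zero hy hW))]
  refine mul_left_cancel₀ (mul_ne_zero h4 hx) ?_
  linear_combination (x + d) ^ 2 * (d + 3 * x) * hψ - (d - x) * (d + 3 * x) ^ 2 * hsq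

lemma exists_param_of_three_division (hd : d ≠ 0) (he : e ≠ 0) (hy : y ≠ 0)
    (hcurve : y ^ 2 = x ^ 3 + (e ^ 2 - 2 * d) * x ^ 2 + d ^ 2 * x)
    (hψ : 3 * x ^ 4 + 4 * (e ^ 2 - 2 * d) * x ^ 3 + 6 * d ^ 2 * x ^ 2 - (d ^ 2) ^ 2 = 0) :
    ∃ T u : F, e = 8 * T ^ 3 * u ∧ d = u ^ 2 * (1 - T ^ 2) ^ 3 * (1 + 3 * T ^ 2) := by
  have h4 : (4 : F) ≠ 0 := by simpa [show (4 : F) = 2 ^ 2 by norm_num] using two_ne_zero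
  have h8 : (8 : F) ≠ 0 := by simpa [show (8 : F) = 2 ^ 3 by norm_num] using two_ne_zero
  have hψ' : 4 * e ^ 2 * x ^ 3 = (d - x) ^ 3 * (d + 3 * x) := by linear_combination hψ
  obtain ⟨T, hT⟩ := exists_sq_mul_eq_of_three_division he hy hcurve hψ'
  set W := d + 3 * x with hW_def
  have hx : 4 * x = (1 - T ^ 2) * W := by linear_combination hT - hW_def
  have hd4 : 4 * d = (1 + 3 * T ^ 2) * W := by linear_combination -3 * hT - hW_def
  have hW : W ≠ 0 := by
    intro h
    exact hd (by simpa [h, h4] using hd4)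
  have hkey : e ^ 2 * (1 - T ^ 2) ^ 3 = 16 * T ^ 6 * W := by
    refine mul_left_cancel₀ (mul_ne_zero h4 (pow_ne_zero 3 hW)) ?_
    calc 4 * W ^ 3 * (e ^ 2 * (1 - T ^ 2) ^ 3) = 4 * e ^ 2 * ((1 - T ^ 2) * W) ^ 3 := by ring
      _ = 64 * (4 * e ^ 2 * x ^ 3) := by rw [← hx]; ring
      _ = 64 * ((T ^ 2 * W) ^ 3 * W) := by rw [hψ', hT]
      _ = 4 * W ^ 3 * (16 * T ^ 6 * W) := by ring
  have hT0 : T ≠ 0 := by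
    rintro rfl
    exact he (pow_eq_zero_iff two_ne_zero |>.mp (by linear_combination hkey))
  refine ⟨T, e / (8 * T ^ 3), ?_, ?_⟩
  · field_simp
  · field_simp
    linear_combination 16 * T ^ 6 * hd4 - (1 + 3 * T ^ 2) * hkey

end Parametrization

/-- every nonsingular curve `y² = x³ + ax² + bx` over `ℚ` with torsion
group `ℤ/12ℤ` is related by an admissible change of variables to `y² = x³ + a₁x² + b₁x`
with `a₁ = 2(3t⁸ + 24t⁶ + 6t⁴ − 1)`, `b₁ = (t² − 1)⁶(1 + 3t²)²` for some positive
rational `t`. -/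
theorem stmt7 (a b : ℚ) (hΔ : (Gamma a b).Δ ≠ 0)
    (htor : Nonempty (AddCommGroup.torsion (Gamma a b).toAffine.Point ≃+ ZMod 12)) :
    ∃ t : ℚ, 0 < t ∧ ∃ C : WeierstrassCurve.VariableChange ℚ,
      C • (Gamma a b) =
        Gamma (2 * (3 * t ^ 8 + 24 * t ^ 6 + 6 * t ^ 4 - 1))
          ((t ^ 2 - 1) ^ 6 * (1 + 3 * t ^ 2) ^ 2) := by
  obtain ⟨φ⟩ := htor
  have h₀ := Gamma_nonsingular_zero hΔ
  obtain ⟨P, hP, h6P⟩ :=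
    exists_addOrderOf_eq_twelve_and_six_nsmul_eq φ (Point.some_ne_zero h₀)
      (Point.add_self_of_Y_eq (by rw [Gamma_negY, neg_zero]))
  obtain ⟨d, e, rfl, rfl⟩ := Gamma_exists_sq_of_add_self_eq_origin (Q := 3 • P)
    (by rw [← h6P, ← add_nsmul])
  obtain ⟨x, y, hy, hcurve, hψ⟩ := Gamma_exists_root_of_three_nsmul_eq_zero (R := 4 • P)
    (fun h => by simpa [hP] using addOrderOf_dvd_of_nsmul_eq_zero h)
    (by rw [smul_smul, show 3 * 4 = addOrderOf P by rw [hP], addOrderOf_nsmul_eq_zero])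
  obtain ⟨⟨hd, he⟩, -⟩ : (d ≠ 0 ∧ e ≠ 0) ∧ e ^ 2 - 4 * d ≠ 0 := by
    have hΔ' : 16 * d ^ 4 * e ^ 2 * (e ^ 2 - 4 * d) ≠ 0 := by
      convert hΔ using 1
      rw [Gamma_Δ]
      ring
    simpa using hΔ'
  obtain ⟨T, u, rfl, rfl⟩ := exists_param_of_three_division hd he hy hcurve hψ
  obtain ⟨hT, hu⟩ : T ≠ 0 ∧ u ≠ 0 := by simpa using he
  refine ⟨|T|, abs_pos.mpr hT, ⟨Units.mk0 u hu, 0, 0, 0⟩,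
    Gamma_variableChange_scale _ ?_ ?_⟩ <;>
    simp only [Units.val_mk0, Even.pow_abs (by decide : Even 8), Even.pow_abs (by decide : Even 6),
      Even.pow_abs (by decide : Even 4), Even.pow_abs (by decide : Even 2)] <;>
    ring
end

section
/- Let t ∈ ℚ with t > 0 and t ≠ 1, and let Γ_t be the Weierstrass curve y² = x³ + a₁·x² + b₁·x over ℚ with a₁ = 2·(3t⁸ + 24t⁶ + 6t⁴ − 1) and b₁ = (t² − 1)⁶·(1 + 3t²)². Then: (i) the point (0, 0) lies on Γ_t and has order 2; (ii) the point ((t² − 1)⁴, 4t²·(t² − 1)⁴·(t² + 1)) lies on Γ_t and has order 3; (iii) the point (−(t² − 1)³·(1 + 3t²), 8t³·(t² − 1)³·(1 + 3t²)) lies on Γ_t and has order 4; (iv) the point ((t² − 1)²·(1 + 3t²)², 4t²·(t² − 1)²·(t² + 1)·(1 + 3t²)²) lies on Γ_t and has order 6. -/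
/-!
On `y² = x³ + ax² + bx` the chord-and-tangent formulas take a simple shape. Translation by the
2-torsion point `T = (0, 0)` is `(x, y) ↦ (b/x, -by/x²)`; a point `P` with `x(P)² = b` satisfies
`2P = T`, because its tangent line passes through `T`; and `2P = -P` exactly when
`(3x² + 2ax + b)² = 4(a + 3x)y²`, i.e. when the doubling formula fixes `x`. On `Γ_t` the
point of (iii) has `x² = b₁`, the point of (ii) satisfies the tripling condition, and the point
of (iv) is `-(T + P₃)`, of order `lcm(2, 3) = 6`.
-/

open WeierstrassCurve.Affine WeierstrassCurve.Affine.Point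

lemma addOrderOf_eq_four_of_two_nsmul {G : Type*} [AddMonoid G] {P Q : G} (hPQ : 2 • P = Q)
    (hQ : addOrderOf Q = 2) : addOrderOf P = 4 := by
  have hQ0 : Q ≠ 0 := by
    rintro rfl
    simp at hQ
  refine addOrderOf_eq_prime_pow (p := 2) (n := 1) (by rwa [pow_one, hPQ]) ?_
  rw [pow_succ, pow_one, mul_nsmul, hPQ, ← hQ, addOrderOf_nsmul_eq_zero]

namespace WeierstrassCurve.Affine.Point

variable {F : Type*} [Field F] [DecidableEq F] {W : WeierstrassCurve.Affine F}

lemma add_self_eq_neg_of_addX_eq {x y : F} {h : W.Nonsingular x y} (hy : y ≠ W.negY x y)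
    (hx : W.addX x x (W.slope x x y y) = x) : some x y h + some x y h = -some x y h := by
  rw [add_self_of_Y_ne hy, neg_some, some.injEq]
  exact ⟨hx, by simp only [addY, negAddY, hx, sub_self, mul_zero, zero_add]⟩

lemma addOrderOf_eq_three_of_addX_eq {x y : F} (h : W.Nonsingular x y)
    (hy : y ≠ W.negY x y) (hx : W.addX x x (W.slope x x y y) = x) :
    addOrderOf (some x y h) = 3 := by
  refine addOrderOf_eq_prime ?_ (some_ne_zero h)
  rw [succ_nsmul, two_smul, add_self_eq_neg_of_addX_eq hy hx, neg_add_cancel]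

end WeierstrassCurve.Affine.Point

namespace Gamma

variable {F : Type} [Field F] {a b x y : F}

lemma negY_eq : (Gamma a b).negY x y = -y := by
  simp [Gamma]

lemma ne_negY [NeZero (2 : F)] (hy : y ≠ 0) : y ≠ (Gamma a b).negY x y := by
  rw [negY_eq]
  intro h
  have h2y : 2 * y = 0 := by linear_combination h
  exact hy ((mul_eq_zero.mp h2y).resolve_left two_ne_zero)

lemma equation_iff_eq : (Gamma a b).Equation x y ↔ y ^ 2 = x ^ 3 + a * x ^ 2 + b * x := by
  simp [equation_iff, Gamma]

lemma nonsingular_zero_zero (hb : b ≠ 0) : (Gamma a b).Nonsingular 0 0 :=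
  nonsingular_zero.mpr ⟨rfl, Or.inr hb⟩

lemma nonsingular_of_equation [NeZero (2 : F)] (hy : y ≠ 0)
    (h : y ^ 2 = x ^ 3 + a * x ^ 2 + b * x) : (Gamma a b).Nonsingular x y :=
  (nonsingular_iff x y).mpr
    ⟨equation_iff_eq.mpr h, Or.inr (ne_negY hy : y ≠ (Gamma a b).negY x y)⟩

lemma slope_self [NeZero (2 : F)] [DecidableEq F] (hy : y ≠ 0) :
    (Gamma a b).slope x x y y = (3 * x ^ 2 + 2 * a * x + b) / (2 * y) := by
  rw [slope_of_Y_ne rfl (ne_negY hy), negY_eq]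
  simp only [Gamma, zero_mul, sub_zero, sub_neg_eq_add, ← two_mul]

variable [DecidableEq F]

lemma addOrderOf_some_zero_zero (h : (Gamma a b).Nonsingular 0 0) :
    addOrderOf (some 0 0 h) = 2 :=
  addOrderOf_eq_prime (by rw [two_smul]; exact add_self_of_Y_eq (by rw [negY_eq, _root_.neg_zero]))
    (some_ne_zero h)

lemma some_zero_zero_add {x' y' : F} (h₀ : (Gamma a b).Nonsingular 0 0)
    (h : (Gamma a b).Nonsingular x y) (h' : (Gamma a b).Nonsingular x' y') (hx : x ≠ 0)
    (hx' : x * x' = b) (hy' : x ^ 2 * y' = -(b * y)) :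
    some 0 0 h₀ + some x y h = some x' y' h' := by
  have hxy := equation_iff_eq.mp h.1
  have hX : (Gamma a b).addX 0 x (y / x) = x' := by
    simp only [addX, Gamma]
    field_simp
    apply mul_left_cancel₀ hx
    linear_combination x * hxy - x ^ 2 * hx'
  rw [add_of_X_ne hx.symm, some.injEq, addY, negAddY, slope_of_X_ne hx.symm, zero_sub, zero_sub,
    neg_div_neg_eq, hX, negY_eq]
  refine ⟨rfl, ?_⟩
  field_simp
  apply mul_left_cancel₀ hx
  linear_combination -hy' - y * hx'

lemma add_self_eq_some_zero_zero [NeZero (2 : F)] (h₀ : (Gamma a b).Nonsingular 0 0)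
    (h : (Gamma a b).Nonsingular x y) (hy : y ≠ 0) (hx : x ^ 2 = b) :
    some x y h + some x y h = some 0 0 h₀ := by
  have hxy := equation_iff_eq.mp h.1
  have hX : (Gamma a b).addX x x ((3 * x ^ 2 + 2 * a * x + b) / (2 * y)) = 0 := by
    simp only [addX, Gamma]
    field_simp
    linear_combination (-4 * (a + 2 * x)) * hxy + (x ^ 2 - b) * hx
  rw [add_self_of_Y_ne (ne_negY hy), some.injEq, addY, negAddY, slope_self hy, hX, negY_eq]
  refine ⟨rfl, ?_⟩
  field_simp
  linear_combination -2 * hxy + x * hx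

lemma addOrderOf_eq_three [NeZero (2 : F)] (h : (Gamma a b).Nonsingular x y) (hy : y ≠ 0)
    (h3 : (3 * x ^ 2 + 2 * a * x + b) ^ 2 = 4 * (a + 3 * x) * y ^ 2) :
    addOrderOf (some x y h) = 3 := by
  refine addOrderOf_eq_three_of_addX_eq h (ne_negY hy) ?_
  rw [slope_self hy]
  simp only [addX, Gamma]
  field_simp
  linear_combination h3

end Gamma

/-- on the curve `Γ_t : y² = x³ + a₁x² + b₁x` with
`a₁ = 2(3t⁸ + 24t⁶ + 6t⁴ − 1)` and `b₁ = (t² − 1)⁶(1 + 3t²)²`, `t ∈ ℚ`, `t > 0`, `t ≠ 1`: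
(i) `(0,0)` is a point of order 2; (ii) `((t²−1)⁴, 4t²(t²−1)⁴(t²+1))` is a point of
order 3; (iii) `(−(t²−1)³(1+3t²), 8t³(t²−1)³(1+3t²))` is a point of order 4;
(iv) `((t²−1)²(1+3t²)², 4t²(t²−1)²(t²+1)(1+3t²)²)` is a point of order 6. -/
theorem stmt9 (t : ℚ) (ht : 0 < t) (ht1 : t ≠ 1) :
    let a₁ : ℚ := 2 * (3 * t ^ 8 + 24 * t ^ 6 + 6 * t ^ 4 - 1)
    let b₁ : ℚ := (t ^ 2 - 1) ^ 6 * (1 + 3 * t ^ 2) ^ 2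
    let W : WeierstrassCurve.Affine ℚ := Gamma a₁ b₁
    (W.Nonsingular 0 0 ∧
      ∀ h : W.Nonsingular 0 0, addOrderOf (WeierstrassCurve.Affine.Point.some _ _ h) = 2) ∧
    (W.Nonsingular ((t ^ 2 - 1) ^ 4) (4 * t ^ 2 * (t ^ 2 - 1) ^ 4 * (t ^ 2 + 1)) ∧
      ∀ h : W.Nonsingular ((t ^ 2 - 1) ^ 4) (4 * t ^ 2 * (t ^ 2 - 1) ^ 4 * (t ^ 2 + 1)),
        addOrderOf (WeierstrassCurve.Affine.Point.some _ _ h) = 3) ∧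
    (W.Nonsingular (-(t ^ 2 - 1) ^ 3 * (1 + 3 * t ^ 2))
        (8 * t ^ 3 * (t ^ 2 - 1) ^ 3 * (1 + 3 * t ^ 2)) ∧
      ∀ h : W.Nonsingular (-(t ^ 2 - 1) ^ 3 * (1 + 3 * t ^ 2))
          (8 * t ^ 3 * (t ^ 2 - 1) ^ 3 * (1 + 3 * t ^ 2)),
        addOrderOf (WeierstrassCurve.Affine.Point.some _ _ h) = 4) ∧
    (W.Nonsingular ((t ^ 2 - 1) ^ 2 * (1 + 3 * t ^ 2) ^ 2)
        (4 * t ^ 2 * (t ^ 2 - 1) ^ 2 * (t ^ 2 + 1) * (1 + 3 * t ^ 2) ^ 2) ∧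
      ∀ h : W.Nonsingular ((t ^ 2 - 1) ^ 2 * (1 + 3 * t ^ 2) ^ 2)
          (4 * t ^ 2 * (t ^ 2 - 1) ^ 2 * (t ^ 2 + 1) * (1 + 3 * t ^ 2) ^ 2),
        addOrderOf (WeierstrassCurve.Affine.Point.some _ _ h) = 6) := by
  intro a₁ b₁ W
  have hu : t ^ 2 - 1 ≠ 0 :=
    sub_ne_zero.mpr ((pow_eq_one_iff_of_nonneg ht.le two_ne_zero).not.mpr ht1)
  have hv : 1 + 3 * t ^ 2 ≠ 0 := by positivity
  have hs : t ^ 2 + 1 ≠ 0 := by positivity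
  have N2 : W.Nonsingular 0 0 := Gamma.nonsingular_zero_zero (by simp [b₁, hu, hv])
  have N3 : W.Nonsingular ((t ^ 2 - 1) ^ 4) (4 * t ^ 2 * (t ^ 2 - 1) ^ 4 * (t ^ 2 + 1)) :=
    Gamma.nonsingular_of_equation (by simp [ht.ne', hu, hs]) (by simp only [a₁, b₁]; ring)
  have N4 : W.Nonsingular (-(t ^ 2 - 1) ^ 3 * (1 + 3 * t ^ 2))
      (8 * t ^ 3 * (t ^ 2 - 1) ^ 3 * (1 + 3 * t ^ 2)) :=
    Gamma.nonsingular_of_equation (by simp [ht.ne', hu, hv]) (by simp only [a₁, b₁]; ring)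
  have N6 : W.Nonsingular ((t ^ 2 - 1) ^ 2 * (1 + 3 * t ^ 2) ^ 2)
      (4 * t ^ 2 * (t ^ 2 - 1) ^ 2 * (t ^ 2 + 1) * (1 + 3 * t ^ 2) ^ 2) :=
    Gamma.nonsingular_of_equation (by simp [ht.ne', hu, hs, hv]) (by simp only [a₁, b₁]; ring)
  have hord2 : addOrderOf (some _ _ N2) = 2 := Gamma.addOrderOf_some_zero_zero N2
  have hord3 : addOrderOf (some _ _ N3) = 3 :=
    Gamma.addOrderOf_eq_three N3 (by simp [ht.ne', hu, hs]) (by simp only [a₁, b₁]; ring)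
  have hord4 : addOrderOf (some _ _ N4) = 4 := by
    refine addOrderOf_eq_four_of_two_nsmul ?_ hord2
    rw [two_smul]
    exact Gamma.add_self_eq_some_zero_zero N2 N4 (by simp [ht.ne', hu, hv])
      (by simp only [b₁]; ring)
  have hord6 : addOrderOf (some _ _ N6) = 6 := by
    have hT3 : some _ _ N2 + some _ _ N3 = -some _ _ N6 := by
      rw [neg_some]
      exact Gamma.some_zero_zero_add N2 N3 _ (by simp [hu]) (by simp only [b₁]; ring)
        (by simp only [W, b₁, Gamma.negY_eq]; ring)
    have hcop : (addOrderOf (some _ _ N2)).Coprime (addOrderOf (some _ _ N3)) := by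
      rw [hord2, hord3]; norm_num
    rw [← addOrderOf_neg, ← hT3,
      (AddCommute.all _ _).addOrderOf_add_eq_mul_addOrderOf_of_coprime hcop, hord2, hord3]
  exact ⟨⟨N2, fun _ => hord2⟩, ⟨N3, fun _ => hord3⟩, ⟨N4, fun _ => hord4⟩,
    ⟨N6, fun _ => hord6⟩⟩
end

section
/- Let t ∈ ℚ with t ∉ {−1, 0, 1}, set a₁ := 2·(3t⁸ + 24t⁶ + 6t⁴ − 1), b₁ := (t² − 1)⁶·(1 + 3t²)², and x₁ := −(t + 1)²·(t − 1)⁶. Then there exists y₁ ∈ ℚ with y₁² = x₁³ + a₁·x₁² + b₁·x₁ (i.e. x₁ is the x-coordinate of a rational point on Γ_t) if and only if there exists v ∈ ℚ with v² = −(t⁴ + 8t³ + 2t² + 1). -/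
theorem exists_sq_eq_sq_mul_iff {K : Type*} [Field K] {c : K} (hc : c ≠ 0) (d : K) :
    (∃ y : K, y ^ 2 = c ^ 2 * d) ↔ ∃ v : K, v ^ 2 = d := by
  constructor
  · rintro ⟨y, hy⟩
    exact ⟨y / c, by rw [div_pow, hy, mul_div_cancel_left₀ d (pow_ne_zero 2 hc)]⟩
  · rintro ⟨v, rfl⟩
    exact ⟨c * v, mul_pow c v 2⟩

theorem gamma_cubic_at_x₁_eq (t : ℚ) :
    let a₁ : ℚ := 2 * (3 * t ^ 8 + 24 * t ^ 6 + 6 * t ^ 4 - 1)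
    let b₁ : ℚ := (t ^ 2 - 1) ^ 6 * (1 + 3 * t ^ 2) ^ 2
    let x₁ : ℚ := -((t + 1) ^ 2 * (t - 1) ^ 6)
    x₁ ^ 3 + a₁ * x₁ ^ 2 + b₁ * x₁ =
      (2 * (t - 1) ^ 6 * (t + 1) ^ 2 * (t ^ 2 + 1)) ^ 2 *
        -(t ^ 4 + 8 * t ^ 3 + 2 * t ^ 2 + 1) := by
  intro a₁ b₁ x₁
  simp only [a₁, b₁, x₁]
  ring

theorem stmt11_general (t : ℚ) (ht1 : t ≠ 1) (ht1' : t ≠ -1) :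
    let a₁ : ℚ := 2 * (3 * t ^ 8 + 24 * t ^ 6 + 6 * t ^ 4 - 1)
    let b₁ : ℚ := (t ^ 2 - 1) ^ 6 * (1 + 3 * t ^ 2) ^ 2
    let x₁ : ℚ := -((t + 1) ^ 2 * (t - 1) ^ 6)
    (∃ y₁ : ℚ, y₁ ^ 2 = x₁ ^ 3 + a₁ * x₁ ^ 2 + b₁ * x₁) ↔
      (∃ v : ℚ, v ^ 2 = -(t ^ 4 + 8 * t ^ 3 + 2 * t ^ 2 + 1)) := by
  intro a₁ b₁ x₁
  have hsub : t - 1 ≠ 0 := sub_ne_zero.mpr ht1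
  have hadd : t + 1 ≠ 0 := fun h => ht1' (eq_neg_of_add_eq_zero_left h)
  have hc : (2 * (t - 1) ^ 6 * (t + 1) ^ 2 * (t ^ 2 + 1) : ℚ) ≠ 0 :=
    mul_ne_zero (mul_ne_zero (mul_ne_zero two_ne_zero (pow_ne_zero _ hsub))
      (pow_ne_zero _ hadd)) (by positivity)
  rw [gamma_cubic_at_x₁_eq t]
  exact exists_sq_eq_sq_mul_iff hc _

/-- for `t ∈ ℚ \ {−1, 0, 1}` and `x₁ = −(t+1)²(t−1)⁶`, the value
`x₁³ + a₁x₁² + b₁x₁` (with `a₁ = 2(3t⁸ + 24t⁶ + 6t⁴ − 1)`, `b₁ = (t² − 1)⁶(1 + 3t²)²`)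
is a rational square if and only if `−(t⁴ + 8t³ + 2t² + 1)` is a rational square. -/
theorem stmt11 (t : ℚ) (ht0 : t ≠ 0) (ht1 : t ≠ 1) (ht1' : t ≠ -1) :
    let a₁ : ℚ := 2 * (3 * t ^ 8 + 24 * t ^ 6 + 6 * t ^ 4 - 1)
    let b₁ : ℚ := (t ^ 2 - 1) ^ 6 * (1 + 3 * t ^ 2) ^ 2
    let x₁ : ℚ := -((t + 1) ^ 2 * (t - 1) ^ 6)
    (∃ y₁ : ℚ, y₁ ^ 2 = x₁ ^ 3 + a₁ * x₁ ^ 2 + b₁ * x₁) ↔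
      (∃ v : ℚ, v ^ 2 = -(t ^ 4 + 8 * t ^ 3 + 2 * t ^ 2 + 1)) :=
  stmt11_general t ht1 ht1'
end

section
/- Let t ∈ ℚ with t ∉ {−1, 0, 1}, set a₁ := 2·(3t⁸ + 24t⁶ + 6t⁴ − 1), b₁ := (t² − 1)⁶·(1 + 3t²)², and x₂ := (t + 1)⁸. Then there exists y₂ ∈ ℚ with y₂² = x₂³ + a₁·x₂² + b₁·x₂ (i.e. x₂ is the x-coordinate of a rational point on Γ_t) if and only if there exists v ∈ ℚ with v² = t⁴ − 2t³ + 13t² + 4t + 4. -/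
theorem gamma_cubic_at_pow_eight {R : Type*} [CommRing R] (t : R) :
    ((t + 1) ^ 8) ^ 3 + 2 * (3 * t ^ 8 + 24 * t ^ 6 + 6 * t ^ 4 - 1) * ((t + 1) ^ 8) ^ 2 +
        (t ^ 2 - 1) ^ 6 * (1 + 3 * t ^ 2) ^ 2 * (t + 1) ^ 8 =
      (4 * t * (t + 1) ^ 7 * (t ^ 2 + 1)) ^ 2 * (t ^ 4 - 2 * t ^ 3 + 13 * t ^ 2 + 4 * t + 4) := by
  ring

theorem stmt12_general (t : ℚ) (ht0 : t ≠ 0) (ht1' : t ≠ -1) :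
    let a₁ : ℚ := 2 * (3 * t ^ 8 + 24 * t ^ 6 + 6 * t ^ 4 - 1)
    let b₁ : ℚ := (t ^ 2 - 1) ^ 6 * (1 + 3 * t ^ 2) ^ 2
    let x₂ : ℚ := (t + 1) ^ 8
    (∃ y₂ : ℚ, y₂ ^ 2 = x₂ ^ 3 + a₁ * x₂ ^ 2 + b₁ * x₂) ↔
      (∃ v : ℚ, v ^ 2 = t ^ 4 - 2 * t ^ 3 + 13 * t ^ 2 + 4 * t + 4) := by
  intro a₁ b₁ x₂
  have ht_succ : t + 1 ≠ 0 := fun h => ht1' (eq_neg_of_add_eq_zero_left h)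
  have hc : 4 * t * (t + 1) ^ 7 * (t ^ 2 + 1) ≠ 0 := by positivity
  rw [gamma_cubic_at_pow_eight]
  exact exists_sq_eq_sq_mul_iff hc _

/-- for `t ∈ ℚ \ {−1, 0, 1}` and `x₂ = (t+1)⁸`, the value
`x₂³ + a₁x₂² + b₁x₂` (with `a₁ = 2(3t⁸ + 24t⁶ + 6t⁴ − 1)`, `b₁ = (t² − 1)⁶(1 + 3t²)²`)
is a rational square if and only if `t⁴ − 2t³ + 13t² + 4t + 4` is a rational square. -/
theorem stmt12 (t : ℚ) (ht0 : t ≠ 0) (ht1 : t ≠ 1) (ht1' : t ≠ -1) :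
    let a₁ : ℚ := 2 * (3 * t ^ 8 + 24 * t ^ 6 + 6 * t ^ 4 - 1)
    let b₁ : ℚ := (t ^ 2 - 1) ^ 6 * (1 + 3 * t ^ 2) ^ 2
    let x₂ : ℚ := (t + 1) ^ 8
    (∃ y₂ : ℚ, y₂ ^ 2 = x₂ ^ 3 + a₁ * x₂ ^ 2 + b₁ * x₂) ↔
      (∃ v : ℚ, v ^ 2 = t ^ 4 - 2 * t ^ 3 + 13 * t ^ 2 + 4 * t + 4) :=
  stmt12_general t ht0 ht1'
end
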